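/- For integers n ≥ 10 and d = 4, with 0 ≤ k ≤ ⌈(1/(n+1))·C(n+4,n)⌉ and integers u, ε with 0 ≤ ε < n satisfying n·u + ε = k·(n+1) − C(n+3, n), one has k − u − ε ≥ n + 1. -/

import Mathlib

/-!
Write `C₃ = C(n+3,3)` and `C₄ = C(n+4,4)`. Substituting `n u = k (n+1) - C₃ - ε` gives
`n (k - u - ε) = C₃ - k - (n-1) ε`, so it suffices that `(n+1) C₃ - C₄ - n - (n+1)(n-1)² ≥ n (n+1)²`,
using `k (n+1) ≤ C₄ + n` from the ceiling bound and `ε ≤ n - 1`. Since `(n+1) C₃ - C₄ = n(n+1)(n+2)(n+3)/8`,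
this is a quartic-versus-cubic inequality, which holds for `n ≥ 10`.
-/

open Nat

lemma sub_one_mul_lt_of_le_ceil_div {α : Type*} [Field α] [LinearOrder α] [IsStrictOrderedRing α]
    [FloorRing α] {a b : α} {k : ℤ} (hb : 0 < b) (hk : k ≤ ⌈a / b⌉) : (k - 1) * b < a := by
  rwa [Int.le_ceil_iff, lt_div_iff₀ hb] at hk

lemma choose_four_mul (n : ℕ) : 24 * (n + 4).choose n = (n + 1) * (n + 2) * (n + 3) * (n + 4) := by
  rw [Nat.choose_symm_add, show 24 = 4 ! from rfl, ← Nat.descFactorial_eq_factorial_mul_choose]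
  simp [Nat.descFactorial_succ]
  ring

lemma choose_three_mul (n : ℕ) : 6 * (n + 3).choose n = (n + 1) * (n + 2) * (n + 3) := by
  rw [Nat.choose_symm_add, show 6 = 3 ! from rfl, ← Nat.descFactorial_eq_factorial_mul_choose]
  simp [Nat.descFactorial_succ]
  ring

lemma add_mul_add_sq_le_choose (n : ℕ) (hn : 10 ≤ n) :
    ((n : ℤ) + 1) * (n * (n + 1) + (n - 1) ^ 2) + n ≤
      (n + 1) * (n + 3).choose n - (n + 4).choose n := by
  have h₄ : 24 * ((n + 4).choose n : ℤ) = (n + 1) * (n + 2) * (n + 3) * (n + 4) := by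
    exact_mod_cast choose_four_mul n
  have h₃ : 6 * ((n + 3).choose n : ℤ) = (n + 1) * (n + 2) * (n + 3) := by
    exact_mod_cast choose_three_mul n
  have hn' : (10 : ℤ) ≤ n := by exact_mod_cast hn
  nlinarith [mul_nonneg (sub_nonneg.2 hn') (sq_nonneg (n : ℤ))]

theorem stmt_2_general (n : ℕ) (k u ε : ℤ) (hn : 10 ≤ n)
    (hk : k ≤ ⌈(((n + 4).choose n : ℚ)) / ((n : ℚ) + 1)⌉)
    (hεn : ε < (n : ℤ))
    (h : (n : ℤ) * u + ε = k * ((n : ℤ) + 1) - ((n + 3).choose n : ℤ)) :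
    (n : ℤ) + 1 ≤ k - u - ε := by
  have hk' : (k - 1) * ((n : ℤ) + 1) < (n + 4).choose n := by
    exact_mod_cast sub_one_mul_lt_of_le_ceil_div (by positivity) hk
  have hsubst : (n : ℤ) * (k - u - ε) = (n + 3).choose n - k - (n - 1) * ε := by
    linear_combination -h
  have hbound := add_mul_add_sq_le_choose n hn
  have hn' : (10 : ℤ) ≤ n := by exact_mod_cast hn
  have hsq : (n : ℤ) * (n + 1) ≤ (n + 3).choose n - k - (n - 1) * ε := by
    refine le_of_mul_le_mul_left ?_ (by positivity : (0 : ℤ) < n + 1)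
    nlinarith [mul_nonneg (by positivity : (0 : ℤ) ≤ n + 1) (by linarith : (0 : ℤ) ≤ n - 1 - ε)]
  rw [← hsubst] at hsq
  exact le_of_mul_le_mul_left hsq (by positivity)

/-- Lemma 6.3(iii) of Brambilla–Ottaviani: the numerical lemma for `d = 4`, `n ≥ 10`. -/
theorem stmt_2 (n : ℕ) (k u ε : ℤ) (hn : 10 ≤ n)
    (hk0 : 0 ≤ k) (hk : k ≤ ⌈(((n + 4).choose n : ℚ)) / ((n : ℚ) + 1)⌉)
    (hε0 : 0 ≤ ε) (hεn : ε < (n : ℤ))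
    (h : (n : ℤ) * u + ε = k * ((n : ℤ) + 1) - ((n + 3).choose n : ℤ)) :
    (n : ℤ) + 1 ≤ k - u - ε :=
  stmt_2_general n k u ε hn hk hεn h
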